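/- arXiv:math-ph/0411011 — 3 statements merged into one kernel-verified Lean document; each statement's English description precedes it below -/
import Mathlib

section
/- (Moser tame estimate) For each integer s ≥ 1 there is a constant C_s such that for all u, v in the Sobolev space H^s of the circle, ‖uv‖_{H^s} ≤ C_s(‖u‖_{H^s}‖v‖_{H^1} + ‖v‖_{H^s}‖u‖_{H^1}). -/
open scoped ENNReal NNReal

/-- The Sobolev `H^s` norm of a periodic function, expressed through its Fourier
coefficients `u : ℤ → ℂ`: `‖u‖_{H^s}² = ∑_k (1+|k|)^{2s} |û_k|²`, valued in `ℝ≥0∞`. -/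
noncomputable def sobNorm (s : ℝ) (u : ℤ → ℂ) : ℝ≥0∞ :=
  (∑' k : ℤ, (1 + (k.natAbs : ℝ≥0∞)) ^ (2 * s) * (‖u k‖₊ : ℝ≥0∞) ^ 2) ^ (1 / 2 : ℝ)

/-- The Fourier coefficients of the pointwise product, i.e. the convolution. -/
noncomputable def fourierConv (u v : ℤ → ℂ) : ℤ → ℂ := fun k => ∑' l : ℤ, u l * v (k - l)

/-!
On the Fourier side the product `uv` is the convolution `û ⋆ v̂`. Since
`(1+|k|)^s ≤ 2^s ((1+|l|)^s + (1+|k-l|)^s)`, the weighted convolution is dominated by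
`2^s ((w û) ⋆ |v̂| + |û| ⋆ (w v̂))` with `w = (1+|·|)^s`, and Young's inequality
`‖f ⋆ g‖_{ℓ²} ≤ ‖f‖_{ℓ²} ‖g‖_{ℓ¹}` bounds each term by `‖u‖_{H^s} ‖v̂‖_{ℓ¹}`, resp.
`‖v‖_{H^s} ‖û‖_{ℓ¹}`. Finally Cauchy–Schwarz gives
`‖û‖_{ℓ¹} ≤ (∑ (1+|k|)^{-2})^{1/2} ‖u‖_{H^1}`, and `∑ (1+|k|)^{-2} < ∞`.
All estimates are carried out in `ℝ≥0∞`, where every series has a sum.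
-/

open MeasureTheory

namespace Moser

section L2

variable {ι : Type*}

noncomputable def l2Norm (f : ι → ℝ≥0∞) : ℝ≥0∞ := (∑' i, f i ^ 2) ^ (1 / 2 : ℝ)

lemma sq_rpow_half (x : ℝ≥0∞) : (x ^ (1 / 2 : ℝ)) ^ 2 = x := by
  simpa using ENNReal.rpow_inv_natCast_pow two_ne_zero x

lemma rpow_half_sq (x : ℝ≥0∞) : (x ^ 2) ^ (1 / 2 : ℝ) = x := by
  simpa using ENNReal.pow_rpow_inv_natCast two_ne_zero x

lemma l2Norm_sq (f : ι → ℝ≥0∞) : l2Norm f ^ 2 = ∑' i, f i ^ 2 := sq_rpow_half _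

lemma l2Norm_mono {f g : ι → ℝ≥0∞} (h : f ≤ g) : l2Norm f ≤ l2Norm g := by
  unfold l2Norm
  gcongr with i
  exact h i

lemma l2Norm_const_mul (c : ℝ≥0∞) (f : ι → ℝ≥0∞) : l2Norm (fun i => c * f i) = c * l2Norm f := by
  simp only [l2Norm, mul_pow, ENNReal.tsum_mul_left,
    ENNReal.mul_rpow_of_nonneg _ _ (by norm_num : (0 : ℝ) ≤ 1 / 2), rpow_half_sq]

lemma l2Norm_add_le (f g : ι → ℝ≥0∞) : l2Norm (f + g) ≤ l2Norm f + l2Norm g := by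
  let _ : MeasurableSpace ι := ⊤
  simpa [lintegral_count, ENNReal.rpow_two, l2Norm] using
    ENNReal.lintegral_Lp_add_le (μ := Measure.count) (measurable_from_top (f := f)).aemeasurable
      (measurable_from_top (f := g)).aemeasurable one_le_two

lemma tsum_mul_le_l2Norm_mul (f g : ι → ℝ≥0∞) : ∑' i, f i * g i ≤ l2Norm f * l2Norm g := by
  let _ : MeasurableSpace ι := ⊤
  simpa [lintegral_count, ENNReal.rpow_two, l2Norm] using
    ENNReal.lintegral_mul_le_Lp_mul_Lq Measure.count .two_two
      (measurable_from_top (f := f)).aemeasurable (measurable_from_top (f := g)).aemeasurable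

-- Cauchy–Schwarz applied to `f * √g` and `√g`.
lemma sq_tsum_mul_le (f g : ι → ℝ≥0∞) :
    (∑' i, f i * g i) ^ 2 ≤ (∑' i, f i ^ 2 * g i) * ∑' i, g i := by
  have h := tsum_mul_le_l2Norm_mul (fun i => f i * g i ^ (1 / 2 : ℝ)) (fun i => g i ^ (1 / 2 : ℝ))
  simp only [mul_assoc, ← sq, sq_rpow_half] at h
  calc (∑' i, f i * g i) ^ 2 ≤ (l2Norm _ * l2Norm _) ^ 2 := by gcongr
    _ = _ := by simp only [mul_pow, l2Norm_sq, sq_rpow_half]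

end L2

section Convolution

variable {G : Type*} [AddCommGroup G]

noncomputable def conv (f g : G → ℝ≥0∞) : G → ℝ≥0∞ := fun x => ∑' y, f y * g (x - y)

lemma tsum_comp_sub_left (g : G → ℝ≥0∞) (x : G) : ∑' y, g (x - y) = ∑' y, g y :=
  (Equiv.subLeft x).tsum_eq g

lemma tsum_comp_sub_right (g : G → ℝ≥0∞) (y : G) : ∑' x, g (x - y) = ∑' x, g x :=
  (Equiv.subRight y).tsum_eq g

lemma conv_comm (f g : G → ℝ≥0∞) : conv f g = conv g f := by
  funext x
  rw [conv, ← (Equiv.subLeft x).tsum_eq]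
  simp only [Equiv.subLeft_apply, sub_sub_cancel, mul_comm]
  rfl

lemma l2Norm_conv_le (f g : G → ℝ≥0∞) : l2Norm (conv f g) ≤ l2Norm f * ∑' x, g x := by
  have hsq : ∑' x, conv f g x ^ 2 ≤ (∑' y, f y ^ 2) * (∑' x, g x) ^ 2 :=
    calc ∑' x, conv f g x ^ 2 ≤ ∑' x, (∑' y, f y ^ 2 * g (x - y)) * ∑' y, g y := by
          gcongr with x
          rw [conv]
          simpa only [tsum_comp_sub_left g x] using sq_tsum_mul_le f (fun y => g (x - y))
      _ = (∑' y, f y ^ 2 * ∑' x, g (x - y)) * ∑' y, g y := by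
          rw [ENNReal.tsum_mul_right, ENNReal.tsum_comm]
          simp only [ENNReal.tsum_mul_left]
      _ = (∑' y, f y ^ 2) * (∑' x, g x) ^ 2 := by
          rw [tsum_congr fun y => by rw [tsum_comp_sub_right], ENNReal.tsum_mul_right]
          ring
  calc l2Norm (conv f g) ≤ ((∑' y, f y ^ 2) * (∑' x, g x) ^ 2) ^ (1 / 2 : ℝ) := by
        unfold l2Norm; gcongr
    _ = l2Norm f * ∑' x, g x := by
        rw [ENNReal.mul_rpow_of_nonneg _ _ (by norm_num), rpow_half_sq]; rfl

end Convolution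

section Weight

noncomputable def weight (s : ℕ) (k : ℤ) : ℝ≥0∞ := (1 + k.natAbs) ^ s

lemma weight_ne_zero (s : ℕ) (k : ℤ) : weight s k ≠ 0 := by
  simp [weight]

lemma weight_ne_top (s : ℕ) (k : ℤ) : weight s k ≠ ⊤ := by
  simp [weight]

lemma weight_le (s : ℕ) (k l : ℤ) : weight s k ≤ 2 ^ s * (weight s l + weight s (k - l)) := by
  set a : ℝ≥0∞ := 1 + l.natAbs
  set b : ℝ≥0∞ := 1 + (k - l).natAbs
  have hab : 1 + (k.natAbs : ℝ≥0∞) ≤ 2 * max a b := by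
    have hk : 1 + k.natAbs ≤ (1 + l.natAbs) + (1 + (k - l).natAbs) := by
      have := Int.natAbs_add_le l (k - l)
      rw [add_sub_cancel] at this
      omega
    calc 1 + (k.natAbs : ℝ≥0∞) ≤ a + b := by simp only [a, b]; exact_mod_cast hk
      _ ≤ 2 * max a b := by rw [two_mul]; gcongr <;> simp
  calc weight s k ≤ (2 * max a b) ^ s := by unfold weight; gcongr
    _ = 2 ^ s * max a b ^ s := mul_pow 2 _ s
    _ ≤ 2 ^ s * (weight s l + weight s (k - l)) := by
        gcongr
        rcases max_choice a b with h | h <;> rw [h]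
        exacts [le_self_add, le_add_self]

lemma sobNorm_eq_l2Norm (s : ℕ) (u : ℤ → ℂ) :
    sobNorm s u = l2Norm (fun k => weight s k * ‖u k‖ₑ) := by
  unfold sobNorm l2Norm weight
  congr 1
  refine tsum_congr fun k => ?_
  rw [mul_pow, ← pow_mul, ← ENNReal.rpow_natCast _ (s * 2), enorm_eq_nnnorm, Nat.cast_mul,
    Nat.cast_ofNat, mul_comm (s : ℝ)]

lemma tsum_inv_weight_one_sq_ne_top : ∑' k : ℤ, (weight 1 k)⁻¹ ^ 2 ≠ ⊤ := by
  have hnat : Summable fun n : ℕ => ((n : ℝ) + 1)⁻¹ ^ 2 := by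
    simpa [one_div] using
      (summable_nat_add_iff 1).mpr (Real.summable_one_div_nat_pow.mpr one_lt_two)
  have hint : Summable fun k : ℤ => ((k.natAbs : ℝ) + 1)⁻¹ ^ 2 :=
    .of_nat_of_neg (by simpa using hnat) (by simpa using hnat)
  convert ENNReal.ofReal_ne_top (r := ∑' k : ℤ, ((k.natAbs : ℝ) + 1)⁻¹ ^ 2)
  rw [ENNReal.ofReal_tsum_of_nonneg (fun _ => by positivity) hint]
  congr! with k
  rw [ENNReal.ofReal_pow (by positivity), ENNReal.ofReal_inv_of_pos (by positivity),
    ENNReal.ofReal_add (by positivity) zero_le_one, ENNReal.ofReal_natCast, ENNReal.ofReal_one,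
    weight, pow_one, add_comm]

lemma tsum_le_l2Norm_inv_weight_mul (f : ℤ → ℝ≥0∞) :
    ∑' k, f k ≤ l2Norm (fun k => (weight 1 k)⁻¹) * l2Norm (fun k => weight 1 k * f k) := by
  calc ∑' k, f k = ∑' k, (weight 1 k)⁻¹ * (weight 1 k * f k) := by
        simp only [← mul_assoc, ENNReal.inv_mul_cancel (weight_ne_zero 1 _) (weight_ne_top 1 _),
          one_mul]
    _ ≤ _ := tsum_mul_le_l2Norm_mul _ _

end Weight

lemma weight_mul_enorm_fourierConv_le (s : ℕ) (u v : ℤ → ℂ) (k : ℤ) :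
    weight s k * ‖fourierConv u v k‖ₑ ≤
      2 ^ s * (conv (fun l => weight s l * ‖u l‖ₑ) (fun l => ‖v l‖ₑ) k
        + conv (fun l => ‖u l‖ₑ) (fun l => weight s l * ‖v l‖ₑ) k) :=
  calc weight s k * ‖fourierConv u v k‖ₑ ≤ ∑' l, weight s k * (‖u l‖ₑ * ‖v (k - l)‖ₑ) := by
        rw [ENNReal.tsum_mul_left]
        gcongr
        exact enorm_tsum_le_tsum_enorm.trans_eq (by simp only [enorm_mul])
    _ ≤ ∑' l, 2 ^ s * (weight s l + weight s (k - l)) * (‖u l‖ₑ * ‖v (k - l)‖ₑ) := by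
        gcongr with l
        exact weight_le s k l
    _ = _ := by
        rw [conv, conv, ← ENNReal.tsum_add, ← ENNReal.tsum_mul_left]
        exact tsum_congr fun l => by ring

lemma sobNorm_fourierConv_le (s : ℕ) (u v : ℤ → ℂ) :
    sobNorm s (fourierConv u v) ≤
      2 ^ s * (sobNorm s u * ∑' k, ‖v k‖ₑ + sobNorm s v * ∑' k, ‖u k‖ₑ) := by
  set U : ℤ → ℝ≥0∞ := fun l => weight s l * ‖u l‖ₑ
  set V : ℤ → ℝ≥0∞ := fun l => weight s l * ‖v l‖ₑ
  calc sobNorm s (fourierConv u v) = l2Norm (fun k => weight s k * ‖fourierConv u v k‖ₑ) :=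
        sobNorm_eq_l2Norm s _
    _ ≤ l2Norm (fun k => 2 ^ s * (conv U (‖v ·‖ₑ) + conv (‖u ·‖ₑ) V) k) :=
        l2Norm_mono (weight_mul_enorm_fourierConv_le s u v)
    _ ≤ 2 ^ s * (l2Norm (conv U (‖v ·‖ₑ)) + l2Norm (conv V (‖u ·‖ₑ))) := by
        rw [l2Norm_const_mul, conv_comm (‖u ·‖ₑ)]
        gcongr
        exact l2Norm_add_le _ _
    _ ≤ _ := by
        rw [sobNorm_eq_l2Norm, sobNorm_eq_l2Norm]
        gcongr <;> exact l2Norm_conv_le _ _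

lemma tsum_enorm_le_mul_sobNorm_one (u : ℤ → ℂ) :
    ∑' k, ‖u k‖ₑ ≤ l2Norm (fun k => (weight 1 k)⁻¹) * sobNorm 1 u := by
  have h := sobNorm_eq_l2Norm 1 u
  rw [Nat.cast_one] at h
  exact h ▸ tsum_le_l2Norm_inv_weight_mul _

end Moser

open Moser

theorem stmt6_general (s : ℕ) :
    ∃ C : ℝ≥0, ∀ u v : ℤ → ℂ, sobNorm s u < ⊤ → sobNorm s v < ⊤ →
      sobNorm s (fourierConv u v) ≤
        (C : ℝ≥0∞) * (sobNorm s u * sobNorm 1 v + sobNorm s v * sobNorm 1 u) := by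
  set A := l2Norm (fun k : ℤ => (weight 1 k)⁻¹)
  have hA : A ≠ ⊤ := ENNReal.rpow_ne_top_of_nonneg (by norm_num) tsum_inv_weight_one_sq_ne_top
  refine ⟨2 ^ s * A.toNNReal, fun u v _ _ => ?_⟩
  calc sobNorm s (fourierConv u v)
      ≤ 2 ^ s * (sobNorm s u * ∑' k, ‖v k‖ₑ + sobNorm s v * ∑' k, ‖u k‖ₑ) :=
        sobNorm_fourierConv_le s u v
    _ ≤ 2 ^ s * (sobNorm s u * (A * sobNorm 1 v) + sobNorm s v * (A * sobNorm 1 u)) := by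
        gcongr <;> exact tsum_enorm_le_mul_sobNorm_one _
    _ = _ := by
        push_cast
        rw [ENNReal.coe_toNNReal hA]
        ring

/-- Moser's tame estimate: `‖uv‖_{H^s} ≤ C_s (‖u‖_{H^s} ‖v‖_{H^1} + ‖v‖_{H^s} ‖u‖_{H^1})`. -/
theorem stmt6 (s : ℕ) (hs : 1 ≤ s) :
    ∃ C : ℝ≥0, ∀ u v : ℤ → ℂ, sobNorm s u < ⊤ → sobNorm s v < ⊤ →
      sobNorm s (fourierConv u v) ≤
        (C : ℝ≥0∞) * (sobNorm s u * sobNorm 1 v + sobNorm s v * sobNorm 1 u) :=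
  stmt6_general s
end

section
/- Let g : J → ℝ be m times differentiable on an interval J ⊂ ℝ with |g^{(m)}(τ)| ≥ d > 0 for all τ ∈ J. Then for any h > 0, the Lebesgue measure of the sublevel set J_h = {τ ∈ J : |g(τ)| < h} satisfies |J_h| ≤ M·h^{1/m}, where M = 2(2+3+···+m+d^{−1}). -/
/-!
If `E = {τ ∈ J | |g τ| < h}` had measure larger than `m r`, cutting the distribution function of
`E` at suitable levels would produce points `y₀ < ⋯ < y_m` of `E` with `y_j - y_i ≥ (j - i) r`.
Iterated Rolle applied to `g` minus its Lagrange interpolant at these nodes gives `ξ ∈ J` with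
`g⁽ᵐ⁾(ξ) = m! ∑ᵢ g(yᵢ) / ∏_{j ≠ i} (yᵢ - y_j)`, and the spacing of the nodes bounds the right-hand
side by `2ᵐ h / rᵐ`. Hence `d rᵐ ≤ 2ᵐ h`, i.e. `|E| ≤ 2m (h/d)^{1/m}`, and Bernoulli's inequality
`m u ≤ uᵐ + m - 1` with `u = d^{-1/m}` turns this into the stated bound.
-/

open MeasureTheory Set
open scoped Nat

theorem exists_hasDerivAt_eq_zero_between_zeros {f f' : ℝ → ℝ} {n : ℕ} {z : ℕ → ℝ}
    (hz : StrictMonoOn z (Iic n)) (hf : ContinuousOn f (Icc (z 0) (z n)))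
    (hf' : ∀ x ∈ Ioo (z 0) (z n), HasDerivAt f (f' x) x) (hzero : ∀ i ≤ n, f (z i) = 0) :
    ∃ w : ℕ → ℝ, ∀ i < n, w i ∈ Ioo (z i) (z (i + 1)) ∧ f' (w i) = 0 := by
  have hrolle : ∀ i < n, ∃ c ∈ Ioo (z i) (z (i + 1)), f' c = 0 := by
    intro i hi
    have hz0 : z 0 ≤ z i := hz.monotoneOn (Nat.zero_le _) hi.le (Nat.zero_le _)
    have hzn : z (i + 1) ≤ z n := hz.monotoneOn (show i + 1 ≤ n from hi) (mem_Iic.2 le_rfl) hi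
    have hsub : Icc (z i) (z (i + 1)) ⊆ Icc (z 0) (z n) := Icc_subset_Icc hz0 hzn
    exact exists_hasDerivAt_eq_zero (hz (show i ≤ n from hi.le) (show i + 1 ≤ n from hi)
      (Nat.lt_succ_self i)) (hf.mono hsub) (by rw [hzero i hi.le, hzero (i + 1) hi])
      fun x hx => hf' x (Ioo_subset_Ioo hz0 hzn hx)
  choose! w hw using hrolle
  exact ⟨w, hw⟩

theorem exists_eq_zero_of_hasDerivAt_chain : ∀ {n : ℕ} {G : ℕ → ℝ → ℝ} {z : ℕ → ℝ},
    StrictMonoOn z (Iic n) → (∀ k < n, ContinuousOn (G k) (Icc (z 0) (z n))) →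
    (∀ k < n, ∀ x ∈ Ioo (z 0) (z n), HasDerivAt (G k) (G (k + 1) x) x) →
    (∀ i ≤ n, G 0 (z i) = 0) → ∃ ξ ∈ Icc (z 0) (z n), G n ξ = 0
  | 0, _, z, _, _, _, hzero => ⟨z 0, left_mem_Icc.2 le_rfl, hzero 0 le_rfl⟩
  | n + 1, G, z, hz, hcont, hderiv, hzero => by
    obtain ⟨w, hw⟩ := exists_hasDerivAt_eq_zero_between_zeros hz (hcont 0 n.succ_pos)
      (hderiv 0 n.succ_pos) hzero
    have hwz : ∀ i ≤ n, z 0 < w i ∧ w i < z (n + 1) := fun i hi =>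
      ⟨(hz.monotoneOn (Nat.zero_le _) (show i ≤ n + 1 by omega) (Nat.zero_le _)).trans_lt
          (hw i (Nat.lt_succ_of_le hi)).1.1,
        (hw i (Nat.lt_succ_of_le hi)).1.2.trans_le
          (hz.monotoneOn (show i + 1 ≤ n + 1 by omega) (mem_Iic.2 le_rfl) (by omega))⟩
    have hw_mono : StrictMonoOn w (Iic n) := by
      intro i (hi : i ≤ n) j (hj : j ≤ n) hij
      exact (hw i (Nat.lt_succ_of_le hi)).1.2.trans_le
        ((hz.monotoneOn (show i + 1 ≤ n + 1 by omega) (show j ≤ n + 1 by omega) hij).trans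
          (hw j (Nat.lt_succ_of_le hj)).1.1.le)
    have hIcc : Icc (w 0) (w n) ⊆ Ioo (z 0) (z (n + 1)) :=
      Icc_subset_Ioo (hwz 0 (Nat.zero_le _)).1 (hwz n le_rfl).2
    obtain ⟨ξ, hξ, hGξ⟩ := exists_eq_zero_of_hasDerivAt_chain (G := fun k => G (k + 1)) hw_mono
      (fun k hk => (hcont (k + 1) (by omega)).mono (hIcc.trans Ioo_subset_Icc_self))
      (fun k hk x hx => hderiv (k + 1) (by omega) x (hIcc (Ioo_subset_Icc_self hx)))
      (fun i hi => (hw i (Nat.lt_succ_of_le hi)).2)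
    exact ⟨ξ, Ioo_subset_Icc_self (hIcc hξ), hGξ⟩

theorem hasDerivAt_iteratedDerivWithin {𝕜 F : Type*} [NontriviallyNormedField 𝕜]
    [NormedAddCommGroup F] [NormedSpace 𝕜 F] {f : 𝕜 → F} {s : Set 𝕜} {n : ℕ} {x : 𝕜}
    (hf : DifferentiableOn 𝕜 (iteratedDerivWithin n f s) s) (hx : x ∈ interior s) :
    HasDerivAt (iteratedDerivWithin n f s) (iteratedDerivWithin (n + 1) f s x) x := by
  have hxs : s ∈ nhds x := mem_interior_iff_mem_nhds.mp hx
  rw [iteratedDerivWithin_succ, derivWithin_of_mem_nhds hxs]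
  exact ((hf x (interior_subset hx)).differentiableAt hxs).hasDerivAt

theorem exists_iteratedDerivWithin_eq_factorial_mul_sum {J : Set ℝ} (hJ : J.OrdConnected)
    {g : ℝ → ℝ} {m : ℕ} (hdiff : ∀ i < m, DifferentiableOn ℝ (iteratedDerivWithin i g J) J)
    {y : ℕ → ℝ} (hy : StrictMonoOn y (Iic m)) (hyJ : ∀ i ≤ m, y i ∈ J) :
    ∃ ξ ∈ J, iteratedDerivWithin m g J ξ = m ! *
      ∑ i ∈ Finset.range (m + 1), g (y i) / ∏ j ∈ (Finset.range (m + 1)).erase i, (y i - y j) := by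
  set s := Finset.range (m + 1)
  have hinj : InjOn y s := hy.injOn.mono fun i hi => Nat.lt_succ_iff.mp (Finset.mem_range.mp hi)
  set P := Lagrange.interpolate s y fun i => g (y i)
  have hP : ∀ i ∈ s, P.eval (y i) = g (y i) := fun i hi =>
    Lagrange.eval_interpolate_at_node _ hinj hi
  have hIcc : Icc (y 0) (y m) ⊆ J := hJ.out (hyJ 0 (Nat.zero_le _)) (hyJ m le_rfl)
  have hIoo : Ioo (y 0) (y m) ⊆ interior J := interior_Icc (a := y 0) ▸ interior_mono hIcc
  obtain ⟨ξ, hξ, hξ0⟩ := exists_eq_zero_of_hasDerivAt_chain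
    (G := fun k x => iteratedDerivWithin k g J x - (Polynomial.derivative^[k] P).eval x) hy
    (fun k hk => ((hdiff k hk).continuousOn.mono hIcc).sub (Polynomial.continuousOn _))
    (fun k hk x hx => by
      refine (hasDerivAt_iteratedDerivWithin (hdiff k hk) (hIoo hx)).sub ?_
      rw [Function.iterate_succ_apply']
      exact Polynomial.hasDerivAt _ x)
    (fun i hi => by simp [hP i (Finset.mem_range.mpr (Nat.lt_succ_of_le hi))])
  refine ⟨ξ, hIcc hξ, ?_⟩
  rw [sub_eq_zero.mp hξ0, Lagrange.eval_iterate_derivative_eq_sum hinj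
    (Lagrange.degree_interpolate_lt _ hinj) (by simp [s])]
  simp only [s, Finset.card_range, Nat.sub_self, Finset.powersetCard_zero, Finset.sum_singleton,
    Finset.prod_empty, mul_one]
  exact congrArg _ (Finset.sum_congr rfl fun i hi => by rw [hP i hi])

def IsSpaced (m : ℕ) (r : ℝ) (y : ℕ → ℝ) : Prop :=
  ∀ i j, i < j → j ≤ m → (j - i : ℝ) * r ≤ y j - y i

theorem IsSpaced.strictMonoOn {m : ℕ} {r : ℝ} {y : ℕ → ℝ} (hy : IsSpaced m r y) (hr : 0 < r) :
    StrictMonoOn y (Iic m) := fun i _ j (hj : j ≤ m) hij =>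
  sub_pos.mp ((mul_pos (sub_pos.mpr (by exact_mod_cast hij)) hr).trans_le (hy i j hij hj))

theorem prod_range_abs_natCast_sub (i : ℕ) : ∏ j ∈ Finset.range i, |(i : ℝ) - j| = i ! := by
  rw [← Nat.descFactorial_self, Nat.descFactorial_eq_prod_range, Nat.cast_prod]
  refine Finset.prod_congr rfl fun j hj => ?_
  have hji : j < i := Finset.mem_range.mp hj
  rw [Nat.cast_sub hji.le, abs_of_pos (sub_pos.mpr (by exact_mod_cast hji))]

theorem prod_erase_range_abs_natCast_sub {i m : ℕ} (hi : i ≤ m) :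
    ∏ j ∈ (Finset.range (m + 1)).erase i, |(i : ℝ) - j| = i ! * (m - i)! := by
  induction m, hi using Nat.le_induction with
  | base =>
    rw [Finset.range_add_one, Finset.erase_insert Finset.notMem_range_self,
      prod_range_abs_natCast_sub, Nat.sub_self, Nat.factorial_zero, Nat.cast_one, mul_one]
  | succ m hm ih =>
    rw [Finset.range_add_one, Finset.erase_insert_of_ne (by omega), Finset.prod_insert
      (fun h => by simp at h), ih, Nat.sub_add_comm hm, Nat.factorial_succ, abs_sub_comm,
      abs_of_pos (by push_cast; linarith [(Nat.cast_le (α := ℝ)).2 hm])]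
    push_cast [Nat.cast_sub hm]
    ring

theorem factorial_mul_factorial_mul_pow_le_prod_abs_sub {y : ℕ → ℝ} {r : ℝ} (hr : 0 ≤ r)
    {m i : ℕ} (hi : i ≤ m) (hy : IsSpaced m r y) :
    (i ! * (m - i)! : ℝ) * r ^ m ≤ ∏ j ∈ (Finset.range (m + 1)).erase i, |y i - y j| := by
  calc (i ! * (m - i)! : ℝ) * r ^ m
      = ∏ j ∈ (Finset.range (m + 1)).erase i, |(i : ℝ) - j| * r := by
        rw [Finset.prod_mul_distrib, Finset.prod_const, prod_erase_range_abs_natCast_sub hi,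
          Finset.card_erase_of_mem (Finset.mem_range.mpr (Nat.lt_succ_of_le hi)),
          Finset.card_range, Nat.succ_sub_one]
    _ ≤ ∏ j ∈ (Finset.range (m + 1)).erase i, |y i - y j| := by
        refine Finset.prod_le_prod (fun j _ => by positivity) fun j hj => ?_
        obtain ⟨hji, hj⟩ := Finset.mem_erase.mp hj
        have hjm : j ≤ m := Nat.lt_succ_iff.mp (Finset.mem_range.mp hj)
        rcases hji.lt_or_gt with hlt | hlt
        · rw [abs_of_pos (sub_pos.mpr (by exact_mod_cast hlt))]
          exact (hy j i hlt hi).trans (le_abs_self _)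
        · rw [abs_sub_comm, abs_sub_comm (y i), abs_of_pos (sub_pos.mpr (by exact_mod_cast hlt))]
          exact (hy i j hlt hjm).trans (le_abs_self _)

theorem sum_factorial_div_factorial_mul_factorial (m : ℕ) :
    ∑ i ∈ Finset.range (m + 1), (m ! : ℝ) / (i ! * (m - i)!) = 2 ^ m := by
  rw [← Finset.sum_congr rfl fun i hi => Nat.cast_choose ℝ (Nat.lt_succ_iff.mp
    (Finset.mem_range.mp hi)), ← Nat.cast_sum, Nat.sum_range_choose, Nat.cast_pow, Nat.cast_ofNat]

theorem mul_pow_le_two_pow_mul_of_isSpaced {J : Set ℝ} (hJ : J.OrdConnected) {g : ℝ → ℝ} {m : ℕ}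
    (hdiff : ∀ i < m, DifferentiableOn ℝ (iteratedDerivWithin i g J) J) {d : ℝ}
    (hlow : ∀ τ ∈ J, d ≤ |iteratedDerivWithin m g J τ|) {h r : ℝ} (hr : 0 < r) {y : ℕ → ℝ}
    (hyJ : ∀ i ≤ m, y i ∈ J) (hsep : IsSpaced m r y)
    (hgy : ∀ i ≤ m, |g (y i)| ≤ h) :
    d * r ^ m ≤ 2 ^ m * h := by
  have hh : 0 ≤ h := (abs_nonneg _).trans (hgy 0 (Nat.zero_le _))
  obtain ⟨ξ, hξ, hξeq⟩ := exists_iteratedDerivWithin_eq_factorial_mul_sum hJ hdiff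
    (hsep.strictMonoOn hr) hyJ
  have hterm : ∀ i ∈ Finset.range (m + 1),
      |g (y i) / ∏ j ∈ (Finset.range (m + 1)).erase i, (y i - y j)| ≤
        h / (r ^ m * m !) * (m ! / (i ! * (m - i)!)) := fun i hi => by
    have hi : i ≤ m := Nat.lt_succ_iff.mp (Finset.mem_range.mp hi)
    rw [abs_div, Finset.abs_prod, div_mul_div_comm, mul_right_comm, mul_div_mul_right _ _
      (by positivity), mul_comm (r ^ m)]
    exact div_le_div₀ hh (hgy i hi) (by positivity)
      (factorial_mul_factorial_mul_pow_le_prod_abs_sub hr.le hi hsep)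
  calc d * r ^ m ≤ |iteratedDerivWithin m g J ξ| * r ^ m := by gcongr; exact hlow ξ hξ
    _ ≤ m ! * (h / (r ^ m * m !) * 2 ^ m) * r ^ m := by
        rw [hξeq, abs_mul, Nat.abs_cast, ← sum_factorial_div_factorial_mul_factorial,
          Finset.mul_sum]
        gcongr
        exact (Finset.abs_sum_le_sum_abs _ _).trans (Finset.sum_le_sum hterm)
    _ = 2 ^ m * h := by field_simp

section DistributionFunction

variable (μ : Measure ℝ) [IsFiniteMeasure μ]

theorem measureReal_Iio_add_measureReal_Ico {s t : ℝ} (hst : s ≤ t) :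
    μ.real (Iio s) + μ.real (Ico s t) = μ.real (Iio t) := by
  rw [← measureReal_union ((Iio_disjoint_Ici le_rfl).mono_right Ico_subset_Ici_self)
    measurableSet_Ico, Iio_union_Ico_eq_Iio hst]

theorem monotone_measureReal_Iio : Monotone fun t => μ.real (Iio t) :=
  fun _ _ hst => measureReal_mono (Iio_subset_Iio hst)

variable {μ}

theorem measureReal_Iio_sub_measureReal_Iio_le (hμ : μ ≤ volume) {s t : ℝ} (hst : s ≤ t) :
    μ.real (Iio t) - μ.real (Iio s) ≤ t - s := by
  rw [← measureReal_Iio_add_measureReal_Ico μ hst, add_sub_cancel_left,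
    ← Real.volume_real_Ico_of_le hst]
  exact ENNReal.toReal_mono measure_Ico_lt_top.ne (hμ _)

theorem lipschitzWith_measureReal_Iio (hμ : μ ≤ volume) :
    LipschitzWith 1 fun t => μ.real (Iio t) := by
  refine LipschitzWith.of_le_add fun s t => ?_
  rcases le_total s t with hst | hts
  · exact (monotone_measureReal_Iio μ hst).trans (le_add_of_nonneg_right dist_nonneg)
  · linarith [measureReal_Iio_sub_measureReal_Iio_le hμ hts, Real.dist_eq s t, le_abs_self (s - t)]

end DistributionFunction

theorem exists_mem_Ico_of_measureReal_restrict_Iio_lt {F : Set ℝ} (hF : volume F ≠ ⊤) {s t : ℝ}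
    (hst : (volume.restrict F).real (Iio s) < (volume.restrict F).real (Iio t)) :
    ∃ x ∈ F, x ∈ Ico s t := by
  have : IsFiniteMeasure (volume.restrict F) := isFiniteMeasure_restrict.mpr hF
  have hpos : (volume.restrict F).real (Ico s t) ≠ 0 := by
    linarith [measureReal_Iio_add_measureReal_Ico (volume.restrict F)
      ((monotone_measureReal_Iio _).reflect_lt hst).le]
  rw [measureReal_restrict_apply measurableSet_Ico] at hpos
  obtain ⟨x, hxs, hxF⟩ := nonempty_of_measure_ne_zero (μ := volume) fun h0 =>
    hpos (by rw [measureReal_def, h0, ENNReal.toReal_zero])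
  exact ⟨x, hxF, hxs⟩

theorem exists_measureReal_restrict_Iio_eq {F : Set ℝ} {a b : ℝ} (hF : F ⊆ Ico a b) {c : ℝ}
    (hc : c ∈ Icc 0 (volume.real F)) : ∃ t, (volume.restrict F).real (Iio t) = c := by
  have : IsFiniteMeasure (volume.restrict F) :=
    isFiniteMeasure_restrict.mpr ((measure_mono hF).trans_lt measure_Ico_lt_top).ne
  have ha : (volume.restrict F).real (Iio a) = 0 := by
    rw [measureReal_restrict_apply measurableSet_Iio,
      (Iio_disjoint_Ici le_rfl).mono_right (hF.trans Ico_subset_Ici_self) |>.inter_eq,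
      measureReal_empty]
  have hb : (volume.restrict F).real (Iio b) = volume.real F := by
    rw [measureReal_restrict_apply measurableSet_Iio,
      inter_eq_right.mpr (hF.trans Ico_subset_Iio_self)]
  exact intermediate_value_univ a b
    (lipschitzWith_measureReal_Iio Measure.restrict_le_self).continuous (ha ▸ hb ▸ hc)

theorem exists_isSpaced_of_lt_volume_of_subset_Ico {F : Set ℝ} {a b : ℝ} (hF : F ⊆ Ico a b)
    {m : ℕ} {r : ℝ} (hr : 0 ≤ r) (hvol : ENNReal.ofReal (m * r) < volume F) :
    ∃ y : ℕ → ℝ, (∀ i ≤ m, y i ∈ F) ∧ IsSpaced m r y := by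
  set μ := volume.restrict F
  have hFfin : volume F ≠ ⊤ := ((measure_mono hF).trans_lt measure_Ico_lt_top).ne
  have : IsFiniteMeasure μ := isFiniteMeasure_restrict.mpr hFfin
  have hL : m * r < volume.real F := (ENNReal.ofReal_lt_iff_lt_toReal (by positivity) hFfin).mp hvol
  set ε := (volume.real F - m * r) / (2 * m + 1)
  have hε : 0 < ε := div_pos (by linarith) (by positivity)
  have hεL : m * (r + 2 * ε) + ε = volume.real F := by
    simp only [ε]; field_simp; ring
  -- The `i`-th point is taken in `[s i, t i)`, a slab of `μ`-mass `ε`; consecutive slabs are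
  -- `μ`-spaced by `r + ε`, and `μ ≤ volume` turns this into a spacing `≥ r`.
  have hslab : ∀ i ≤ m, ∃ s t,
      μ.real (Iio s) = i * (r + 2 * ε) ∧ μ.real (Iio t) = i * (r + 2 * ε) + ε := by
    intro i hi
    have him : (i : ℝ) * (r + 2 * ε) + ε ≤ volume.real F := by rw [← hεL]; gcongr
    obtain ⟨s, hs⟩ := exists_measureReal_restrict_Iio_eq hF (c := i * (r + 2 * ε))
      ⟨by positivity, by linarith⟩
    obtain ⟨t, ht⟩ := exists_measureReal_restrict_Iio_eq hF (c := i * (r + 2 * ε) + ε)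
      ⟨by positivity, him⟩
    exact ⟨s, t, hs, ht⟩
  choose! s t hs ht using hslab
  have hpt : ∀ i ≤ m, ∃ x ∈ F, x ∈ Ico (s i) (t i) := fun i hi =>
    exists_mem_Ico_of_measureReal_restrict_Iio_lt hFfin (by rw [hs i hi, ht i hi]; linarith)
  choose! y hyF hy using hpt
  refine ⟨y, hyF, fun i j hij hj => ?_⟩
  have hi : i ≤ m := hij.le.trans hj
  have hji : (1 : ℝ) ≤ j - i := by
    rw [le_sub_iff_add_le']; exact_mod_cast hij
  have hgap : μ.real (Iio (t i)) < μ.real (Iio (s j)) := by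
    rw [ht i hi, hs j hj]; nlinarith
  have hμ := measureReal_Iio_sub_measureReal_Iio_le (μ := μ) Measure.restrict_le_self
    ((monotone_measureReal_Iio μ).reflect_lt hgap).le
  rw [hs j hj, ht i hi] at hμ
  nlinarith [(hy i hi).2, (hy j hj).1]

theorem exists_lt_volume_inter_Ico {E : Set ℝ} {c : ENNReal} (hc : c < volume E) :
    ∃ n : ℕ, c < volume (E ∩ Ico (-n : ℝ) n) := by
  have hmono : Monotone fun n : ℕ => E ∩ Ico (-n : ℝ) n := fun k n hkn =>
    inter_subset_inter_right _ (Ico_subset_Ico (by simpa using hkn) (by simpa using hkn))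
  have hunion : ⋃ n : ℕ, E ∩ Ico (-n : ℝ) n = E := by
    refine (iUnion_subset fun n => inter_subset_left).antisymm fun x hx => ?_
    obtain ⟨n, hn⟩ := exists_nat_gt |x|
    exact mem_iUnion.mpr ⟨n, hx, by linarith [neg_abs_le x], (le_abs_self x).trans_lt hn⟩
  rwa [← hunion, hmono.measure_iUnion, lt_iSup_iff] at hc

theorem exists_isSpaced_of_lt_volume {E : Set ℝ} {m : ℕ} {r : ℝ} (hr : 0 ≤ r)
    (hvol : ENNReal.ofReal (m * r) < volume E) :
    ∃ y : ℕ → ℝ, (∀ i ≤ m, y i ∈ E) ∧ IsSpaced m r y := by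
  obtain ⟨n, hn⟩ := exists_lt_volume_inter_Ico hvol
  obtain ⟨y, hyE, hy⟩ := exists_isSpaced_of_lt_volume_of_subset_Ico inter_subset_right hr hn
  exact ⟨y, fun i hi => (hyE i hi).1, hy⟩

theorem volume_le_of_forall_isSpaced_le {E : Set ℝ} {m : ℕ} (hm : m ≠ 0) {R : ℝ}
    (hR : ∀ r > 0, ∀ y : ℕ → ℝ, (∀ i ≤ m, y i ∈ E) → IsSpaced m r y → r ≤ R) :
    volume E ≤ ENNReal.ofReal (m * R) := by
  by_contra! hlt
  obtain ⟨s, -, hRs, hsE⟩ := ENNReal.lt_iff_exists_real_btwn.mp hlt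
  have hm' : (0 : ℝ) < m := by exact_mod_cast Nat.pos_of_ne_zero hm
  have hs : 0 < s := ENNReal.ofReal_pos.mp (hRs.trans_le' (zero_le))
  obtain ⟨y, hyE, hy⟩ := exists_isSpaced_of_lt_volume (div_pos hs hm').le
    (by rwa [mul_div_cancel₀ _ hm'.ne'])
  have hsR := hR _ (div_pos hs hm') y hyE hy
  exact hRs.not_ge (ENNReal.ofReal_le_ofReal (by rwa [div_le_iff₀' hm'] at hsR))

theorem natCast_mul_le_sum_Icc_add_pow (m : ℕ) {u : ℝ} (hu : 0 ≤ u) :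
    m * u ≤ (∑ i ∈ Finset.Icc 2 m, (i : ℝ)) + u ^ m := by
  have hbernoulli := one_add_mul_le_pow (show (-2 : ℝ) ≤ u - 1 by linarith) m
  rw [add_sub_cancel] at hbernoulli
  have hcard : m ≤ (Finset.Icc 2 m).card + 1 := by rw [Nat.card_Icc]; omega
  have hsum := Finset.card_nsmul_le_sum (Finset.Icc 2 m) (fun i => (i : ℝ)) 1 fun i hi => by
    exact_mod_cast one_le_two.trans (Finset.mem_Icc.mp hi).1
  rw [nsmul_one] at hsum
  linarith [(Nat.cast_le (α := ℝ)).2 hcard, Nat.cast_add_one (R := ℝ) (Finset.Icc 2 m).card]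

theorem stmt7 (J : Set ℝ) (hJ : J.OrdConnected) (g : ℝ → ℝ) (m : ℕ) (hm : 1 ≤ m)
    (d : ℝ) (hd : 0 < d)
    (hdiff : ∀ i < m, DifferentiableOn ℝ (iteratedDerivWithin i g J) J)
    (hlow : ∀ τ ∈ J, d ≤ |iteratedDerivWithin m g J τ|)
    (h : ℝ) (hh : 0 < h) :
    volume {τ ∈ J | |g τ| < h} ≤
      ENNReal.ofReal ((2 * ((∑ i ∈ Finset.Icc 2 m, (i : ℝ)) + d⁻¹)) * h ^ (1 / (m : ℝ))) := by
  have hm0 : m ≠ 0 := Nat.one_le_iff_ne_zero.mp hm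
  have hu : (d⁻¹ ^ (1 / (m : ℝ))) ^ m = d⁻¹ := by
    rw [one_div, Real.rpow_inv_natCast_pow (inv_nonneg.2 hd.le) hm0]
  have hR : (2 * h ^ (1 / (m : ℝ)) * d⁻¹ ^ (1 / (m : ℝ))) ^ m = 2 ^ m * h / d := by
    rw [mul_pow, mul_pow, hu, one_div, Real.rpow_inv_natCast_pow hh.le hm0, div_eq_mul_inv]
  set u := d⁻¹ ^ (1 / (m : ℝ))
  set R := 2 * h ^ (1 / (m : ℝ)) * u
  have hspacing : ∀ r > 0, ∀ y : ℕ → ℝ, (∀ i ≤ m, y i ∈ {τ ∈ J | |g τ| < h}) →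
      IsSpaced m r y → r ≤ R := by
    intro r hr y hyE hy
    have hbound := mul_pow_le_two_pow_mul_of_isSpaced hJ hdiff hlow hr
      (fun i hi => (hyE i hi).1) hy fun i hi => (hyE i hi).2.le
    rw [← pow_le_pow_iff_left₀ hr.le (by positivity) hm0, hR, le_div_iff₀ hd]
    linarith
  refine (volume_le_of_forall_isSpaced_le hm0 hspacing).trans (ENNReal.ofReal_le_ofReal ?_)
  calc (m : ℝ) * R = 2 * (m * u) * h ^ (1 / (m : ℝ)) := by ring
    _ ≤ 2 * ((∑ i ∈ Finset.Icc 2 m, (i : ℝ)) + d⁻¹) * h ^ (1 / (m : ℝ)) := by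
        rw [← hu]; gcongr; exact natCast_mul_le_sum_Icc_add_pow m (by positivity)
end

section
/- Let u⁽¹⁾,…,u⁽ᴷ⁾ be K linearly independent vectors in ℝ^K with ℓ¹-norm at most 1. Then for every w ∈ ℝ^K there exists an index i ∈ {1,…,K} such that |u⁽ⁱ⁾·w| ≥ ‖w‖_{ℓ¹}·|det(u⁽¹⁾,…,u⁽ᴷ⁾)| / K^{3/2}. -/
/-!
Write `A` for the matrix with rows `u⁽ⁱ⁾`. Since `adj A * A = det A • 1`, we have
`det A • w = adj A *ᵥ (A *ᵥ w)`, so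
`|det A| ‖w‖₁ ≤ (∑ᵢⱼ |adj A i j|) · maxᵢ |u⁽ⁱ⁾ · w|`.
The rows of `A` have Euclidean norm at most `1`, and Hadamard's inequality then bounds every
column of `adj A` in Euclidean norm by `1`, hence in `ℓ¹`-norm by `√K`; summing over the `K`
columns gives the factor `K^{3/2}`.
-/

open Matrix Finset

variable {n : Type*} [Fintype n]

lemma prod_le_one_of_sum_le_card (μ : n → ℝ) (hμ : ∀ i, 0 ≤ μ i)
    (hsum : ∑ i, μ i ≤ Fintype.card n) : ∏ i, μ i ≤ 1 := by
  calc ∏ i, μ i ≤ ∏ i, Real.exp (μ i - 1) :=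
        prod_le_prod (fun i _ => hμ i) fun i _ => by linarith [Real.add_one_le_exp (μ i - 1)]
    _ = Real.exp (∑ i, μ i - Fintype.card n) := by
        rw [← Real.exp_sum, sum_sub_distrib, sum_const, card_univ, nsmul_one]
    _ ≤ 1 := Real.exp_le_one_iff.mpr (by linarith)

lemma sum_sq_le_one_of_sum_abs_le_one (v : n → ℝ) (hv : ∑ j, |v j| ≤ 1) :
    ∑ j, v j ^ 2 ≤ 1 :=
  calc ∑ j, v j ^ 2 = ∑ j, |v j| ^ 2 := by simp only [sq_abs]
    _ ≤ (∑ j, |v j|) ^ 2 := sum_sq_le_sq_sum_of_nonneg fun j _ => abs_nonneg (v j)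
    _ ≤ 1 := pow_le_one₀ (sum_nonneg fun j _ => abs_nonneg (v j)) hv

lemma sum_abs_le_sqrt_card_of_sum_sq_le_one (v : n → ℝ) (hv : ∑ j, v j ^ 2 ≤ 1) :
    ∑ j, |v j| ≤ √(Fintype.card n) := by
  refine (le_abs_self _).trans (Real.abs_le_sqrt ?_)
  calc (∑ j, |v j|) ^ 2 ≤ Fintype.card n * ∑ j, |v j| ^ 2 := by
        simpa using sq_sum_le_card_mul_sum_sq (s := univ) (f := fun j => |v j|)
    _ ≤ Fintype.card n * 1 := by simp only [sq_abs]; gcongr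
    _ = Fintype.card n := mul_one _

lemma sum_abs_mulVec_le {m : Type*} [Fintype m] (B : Matrix m n ℝ) (x : n → ℝ) {M : ℝ}
    (hx : ∀ i, |x i| ≤ M) :
    ∑ j, |(B *ᵥ x) j| ≤ (∑ i, ∑ j, |B j i|) * M :=
  calc ∑ j, |(B *ᵥ x) j| ≤ ∑ j, ∑ i, |B j i| * |x i| :=
        sum_le_sum fun j _ => (abs_sum_le_sum_abs _ _).trans_eq <| by simp only [abs_mul]
    _ ≤ ∑ j, ∑ i, |B j i| * M := by gcongr with j _ i _; exact hx i
    _ = (∑ i, ∑ j, |B j i|) * M := by rw [sum_comm, sum_mul]; simp only [sum_mul]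

variable [DecidableEq n]

/-- Hadamard's inequality, for rows of Euclidean norm at most `1`. -/
lemma abs_det_le_one_of_sum_sq_le_one (A : Matrix n n ℝ) (hA : ∀ i, ∑ j, A i j ^ 2 ≤ 1) :
    |A.det| ≤ 1 := by
  have hG : (A * Aᴴ).PosSemidef := posSemidef_self_mul_conjTranspose A
  have htrace : ∑ i, hG.isHermitian.eigenvalues i ≤ Fintype.card n := by
    have := hG.isHermitian.trace_eq_sum_eigenvalues
    simp only [RCLike.ofReal_real_eq_id, id] at this
    rw [← this, trace]
    calc ∑ i, (A * Aᴴ).diag i = ∑ i, ∑ j, A i j ^ 2 := by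
          simp [Matrix.diag, mul_apply, sq]
      _ ≤ ∑ _i : n, (1 : ℝ) := sum_le_sum fun i _ => hA i
      _ = Fintype.card n := by simp
  have hdet_sq : A.det ^ 2 ≤ 1 := by
    calc A.det ^ 2 = (A * Aᴴ).det := by simp [det_mul, sq]
      _ = ∏ i, hG.isHermitian.eigenvalues i := by
        simpa using hG.isHermitian.det_eq_prod_eigenvalues
      _ ≤ 1 := prod_le_one_of_sum_le_card _ hG.eigenvalues_nonneg htrace
  simpa using sq_le_one_iff_abs_le_one _ |>.mp hdet_sq

lemma abs_det_updateRow_le_sqrt (A : Matrix n n ℝ) (hA : ∀ i, ∑ j, A i j ^ 2 ≤ 1)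
    (k : n) (v : n → ℝ) : |(A.updateRow k v).det| ≤ √(∑ j, v j ^ 2) := by
  have hsum_nonneg : 0 ≤ ∑ j, v j ^ 2 := sum_nonneg fun j _ => sq_nonneg _
  rcases hsum_nonneg.eq_or_lt with hsum | hsum
  · have hv : v = 0 := funext fun j => pow_eq_zero_iff two_ne_zero |>.mp <|
      congrFun ((Fintype.sum_eq_zero_iff_of_nonneg fun j => sq_nonneg (v j)).mp hsum.symm) j
    simp [hv, det_eq_zero_of_row_eq_zero k]
  set s := √(∑ j, v j ^ 2)
  have hs : 0 < s := Real.sqrt_pos.mpr hsum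
  have hs_sq : s ^ 2 = ∑ j, v j ^ 2 := Real.sq_sqrt hsum_nonneg
  have hrows : ∀ i, ∑ j, A.updateRow k (s⁻¹ • v) i j ^ 2 ≤ 1 := by
    intro i
    rcases eq_or_ne i k with rfl | hik
    · have : ∑ j, (s⁻¹ * v j) ^ 2 = s⁻¹ ^ 2 * s ^ 2 := by
        rw [hs_sq, mul_sum]; exact sum_congr rfl fun j _ => by ring
      simp only [updateRow_self, Pi.smul_apply, smul_eq_mul, this]
      rw [← mul_pow, inv_mul_cancel₀ hs.ne', one_pow]
    · simpa only [updateRow_ne hik] using hA i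
  have := abs_det_le_one_of_sum_sq_le_one _ hrows
  rw [det_updateRow_smul, abs_mul, abs_inv, abs_of_pos hs] at this
  rwa [inv_mul_le_iff₀ hs, mul_one] at this

lemma det_updateRow_eq_sum_adjugate_mul (A : Matrix n n ℝ) (k : n) (v : n → ℝ) :
    (A.updateRow k v).det = ∑ i, adjugate A i k * v i := by
  rw [← cramer_transpose_apply, cramer_eq_adjugate_mulVec, mulVec, dotProduct,
    ← adjugate_transpose]
  rfl

lemma sum_sq_adjugate_le_one (A : Matrix n n ℝ) (hA : ∀ i, ∑ j, A i j ^ 2 ≤ 1) (k : n) :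
    ∑ i, adjugate A i k ^ 2 ≤ 1 := by
  set c := fun i => adjugate A i k
  have hdet : (A.updateRow k c).det = ∑ i, c i ^ 2 := by
    simp only [det_updateRow_eq_sum_adjugate_mul, c, sq]
  have hle := abs_det_updateRow_le_sqrt A hA k c
  rw [hdet, abs_of_nonneg (sum_nonneg fun i _ => sq_nonneg _)] at hle
  nlinarith [Real.sqrt_nonneg (∑ i, c i ^ 2),
    Real.sq_sqrt (sum_nonneg fun i (_ : i ∈ univ) => sq_nonneg (c i))]

theorem abs_det_mul_sum_abs_le [Nonempty n] (A : Matrix n n ℝ) (hA : ∀ i, ∑ j, |A i j| ≤ 1)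
    (w : n → ℝ) {M : ℝ} (hM : ∀ i, |(A *ᵥ w) i| ≤ M) :
    |A.det| * ∑ j, |w j| ≤ Fintype.card n * √(Fintype.card n) * M := by
  have hA₂ : ∀ i, ∑ j, A i j ^ 2 ≤ 1 := fun i => sum_sq_le_one_of_sum_abs_le_one _ (hA i)
  have hM₀ : 0 ≤ M := (abs_nonneg _).trans (hM (Classical.arbitrary n))
  calc |A.det| * ∑ j, |w j| = ∑ j, |(adjugate A *ᵥ (A *ᵥ w)) j| := by
        simp [mulVec_mulVec, adjugate_mul, smul_mulVec, abs_mul, mul_sum]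
    _ ≤ (∑ i, ∑ j, |adjugate A j i|) * M := sum_abs_mulVec_le _ _ hM
    _ ≤ (∑ _i : n, √(Fintype.card n)) * M := by
        gcongr with i
        exact sum_abs_le_sqrt_card_of_sum_sq_le_one _ (sum_sq_adjugate_le_one A hA₂ i)
    _ = Fintype.card n * √(Fintype.card n) * M := by simp

theorem stmt8_general (K : ℕ) (hK : 1 ≤ K) (u : Fin K → (Fin K → ℝ))
    (hnorm : ∀ i, ∑ j, |u i j| ≤ 1) (w : Fin K → ℝ) :
    ∃ i : Fin K,
      (∑ j, |w j|) * |Matrix.det (Matrix.transpose (Matrix.of u))| / (K : ℝ) ^ (3 / 2 : ℝ) ≤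
        |∑ j, u i j * w j| := by
  have : Nonempty (Fin K) := ⟨⟨0, hK⟩⟩
  obtain ⟨i₀, -, hmax⟩ := exists_max_image univ (fun i => |∑ j, u i j * w j|) univ_nonempty
  refine ⟨i₀, ?_⟩
  have hK_pos : (0 : ℝ) < K := by exact_mod_cast hK
  have hpow : (K : ℝ) ^ (3 / 2 : ℝ) = K * √K := by
    rw [show (3 / 2 : ℝ) = 1 + 1 / 2 by norm_num, Real.rpow_add hK_pos, Real.rpow_one,
      Real.sqrt_eq_rpow]
  have := abs_det_mul_sum_abs_le (of u) hnorm w (M := |∑ j, u i₀ j * w j|)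
    fun i => by simpa [mulVec, dotProduct] using hmax i (mem_univ i)
  rw [det_transpose, hpow, div_le_iff₀ (by positivity)]
  simpa [mul_comm] using this

theorem stmt8 (K : ℕ) (hK : 1 ≤ K) (u : Fin K → (Fin K → ℝ))
    (hind : LinearIndependent ℝ u) (hnorm : ∀ i, ∑ j, |u i j| ≤ 1) (w : Fin K → ℝ) :
    ∃ i : Fin K,
      (∑ j, |w j|) * |Matrix.det (Matrix.transpose (Matrix.of u))| / (K : ℝ) ^ (3 / 2 : ℝ) ≤
        |∑ j, u i j * w j| :=
  stmt8_general K hK u hnorm w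
end
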